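/- Let Ω ⊆ ℝⁿ be a nonempty closed convex set, F : ℝⁿ → ℝⁿ continuous and monotone on Ω and coercive with respect to Ω, and let φ : ℝⁿ → ℝ ∪ {+∞} be convex with effective domain Ω and continuous on Ω, with 0 ∈ ri(dom ∂φ − Ω), S₀ nonempty and closed, and 0 ∈ ri(dom ∂φ − S₀). Then for every ε > 0, S₀ ∩ S_{Gεφ} ⊆ S_φ. -/

import Mathlib

open Set Pointwise
open scoped InnerProductSpace

/-- The dual gap function `G(x) = sup_{y ∈ Ω} ⟨F(y), x − y⟩`, valued in `EReal`. -/
noncomputable def dualGap {n : ℕ} (Ω : Set (EuclideanSpace ℝ (Fin n)))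
    (F : EuclideanSpace ℝ (Fin n) → EuclideanSpace ℝ (Fin n))
    (x : EuclideanSpace ℝ (Fin n)) : EReal :=
  ⨆ y ∈ Ω, ((⟪F y, x - y⟫_ℝ : ℝ) : EReal)

/-- The (convex) subdifferential of φ (viewed as the extended function equal to φ on
Ω and +∞ outside of Ω, so that its effective domain is Ω). -/
def subdiffOn {n : ℕ} (Ω : Set (EuclideanSpace ℝ (Fin n)))
    (φ : EuclideanSpace ℝ (Fin n) → ℝ) (x : EuclideanSpace ℝ (Fin n)) :
    Set (EuclideanSpace ℝ (Fin n)) :=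
  {v | x ∈ Ω ∧ ∀ y ∈ Ω, φ x + ⟪v, y - x⟫_ℝ ≤ φ y}

/-!
By monotonicity the dual gap vanishes at every point of `S₀`, so a point `x ∈ S₀ ∩ S_{Gεφ}`
minimises `φ` over `S₀`, which is convex by Minty's lemma. The vector `v` is then produced by the
sum rule for `φ + ι_{S₀}`: separate `(0, φ x)` properly (in the sense of relative interiors) from
the convex set `{(y - z, t) | y ∈ Ω, z ∈ S₀, φ y ≤ t} ⊆ ℝⁿ × ℝ`. The qualification
`0 ∈ ri (dom ∂φ - S₀)` makes the separating hyperplane non-vertical. It implies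
`0 ∈ ri (Ω - S₀)` because `ri Ω ⊆ dom ∂φ`, which is the same separation with `S₀` a point.
-/

section IntrinsicInterior

variable {V : Type*} [NormedAddCommGroup V] [NormedSpace ℝ V]

theorem mem_intrinsicInterior_iff_forall_dist_lt {s : Set V} {x : V} :
    x ∈ intrinsicInterior ℝ s ↔
      x ∈ affineSpan ℝ s ∧ ∃ δ > 0, ∀ y ∈ affineSpan ℝ s, dist y x < δ → y ∈ s := by
  constructor
  · rintro ⟨x, hx, rfl⟩
    obtain ⟨δ, hδ, hball⟩ := Metric.mem_nhds_iff.1 (mem_interior_iff_mem_nhds.1 hx)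
    exact ⟨x.2, δ, hδ, fun y hy hyx =>
      hball (show (⟨y, hy⟩ : affineSpan ℝ s) ∈ Metric.ball x δ from hyx)⟩
  · rintro ⟨hx, δ, hδ, hball⟩
    refine ⟨⟨x, hx⟩, mem_interior_iff_mem_nhds.2 (Metric.mem_nhds_iff.2 ⟨δ, hδ, ?_⟩), rfl⟩
    exact fun y hy => hball y y.2 hy

theorem intrinsicInterior_mono_of_subset_affineSpan {s t : Set V} (hst : s ⊆ t)
    (hts : t ⊆ affineSpan ℝ s) : intrinsicInterior ℝ s ⊆ intrinsicInterior ℝ t := by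
  have hspan : affineSpan ℝ t = affineSpan ℝ s :=
    le_antisymm (affineSpan_le.2 hts) (affineSpan_mono ℝ hst)
  intro x hx
  obtain ⟨hx, δ, hδ, hball⟩ := mem_intrinsicInterior_iff_forall_dist_lt.1 hx
  rw [mem_intrinsicInterior_iff_forall_dist_lt, hspan]
  exact ⟨hx, δ, hδ, fun y hy hyx => hst (hball y hy hyx)⟩

theorem Convex.combo_intrinsicInterior_self_mem_intrinsicInterior {s : Set V}
    (hs : Convex ℝ s) {x y : V} (hx : x ∈ intrinsicInterior ℝ s) (hy : y ∈ s) {t : ℝ}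
    (ht₀ : 0 < t) (ht₁ : t ≤ 1) : t • x + (1 - t) • y ∈ intrinsicInterior ℝ s := by
  rw [mem_intrinsicInterior_iff_forall_dist_lt] at hx ⊢
  obtain ⟨hx, δ, hδ, hball⟩ := hx
  have hy' := subset_affineSpan ℝ s hy
  have hline : ∀ p : V, ∀ c : ℝ, AffineMap.lineMap y p c = c • p + (1 - c) • y := fun p c => by
    rw [AffineMap.lineMap_apply_module]; module
  refine ⟨hline x t ▸ AffineMap.lineMap_mem t hy' hx, t * δ, by positivity, fun p hp hpm => ?_⟩
  have hq_aff := hline p t⁻¹ ▸ AffineMap.lineMap_mem (Q := affineSpan ℝ s) t⁻¹ hy' hp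
  set q := t⁻¹ • p + (1 - t⁻¹) • y
  have hq : q ∈ s := by
    refine hball q hq_aff ?_
    have : q - x = t⁻¹ • (p - (t • x + (1 - t) • y)) := by
      simp only [q]
      match_scalars <;> field_simp
      ring
    rw [dist_eq_norm, this, norm_smul, Real.norm_of_nonneg (inv_nonneg.2 ht₀.le), ← dist_eq_norm,
      inv_mul_lt_iff₀ ht₀]
    exact hpm
  have hp : p = t • q + (1 - t) • y := by
    simp only [q]
    match_scalars <;> field_simp
    ring
  exact hp ▸ hs hq hy ht₀.le (by linarith) (by ring)

theorem eq_zero_of_forall_nonpos_of_zero_mem_intrinsicInterior {s : Set V} (ℓ : V →ₗ[ℝ] ℝ)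
    (hℓ : ∀ u ∈ s, ℓ u ≤ 0) (h0 : (0 : V) ∈ intrinsicInterior ℝ s) {u : V} (hu : u ∈ s) :
    ℓ u = 0 := by
  obtain ⟨h0s, δ, hδ, hball⟩ := mem_intrinsicInterior_iff_forall_dist_lt.1 h0
  set c := δ / (2 * (‖u‖ + 1))
  have hc : 0 < c := by positivity
  have hcu : (-c) • u ∈ s := by
    refine hball _ ?_ ?_
    · simpa [AffineMap.lineMap_apply_module] using
        AffineMap.lineMap_mem (-c) h0s (subset_affineSpan ℝ s hu)
    · rw [dist_zero_right, norm_smul, Real.norm_of_nonpos (by linarith), neg_neg]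
      calc c * ‖u‖ < c * (‖u‖ + 1) := by gcongr; linarith
        _ < δ := by simp only [c]; field_simp; linarith
  have := hℓ _ hcu
  rw [map_smul, smul_eq_mul] at this
  exact le_antisymm (hℓ u hu) (nonneg_of_mul_nonpos_right this (by linarith))

theorem mem_intrinsicInterior_of_mem_interior_add {C : Set V} {U' : Submodule ℝ V}
    (hU' : Disjoint (affineSpan ℝ C).direction U') {q : V} (hq : q ∈ affineSpan ℝ C)
    (h : q ∈ interior (C + (U' : Set V))) : q ∈ intrinsicInterior ℝ C := by
  obtain ⟨η, hη, hball⟩ := Metric.mem_nhds_iff.1 (mem_interior_iff_mem_nhds.1 h)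
  refine mem_intrinsicInterior_iff_forall_dist_lt.2 ⟨hq, η, hη, fun r hr hrq => ?_⟩
  obtain ⟨c, hc, b, hb, rfl⟩ := hball hrq
  have hbU : b ∈ (affineSpan ℝ C).direction := by
    simpa using AffineSubspace.vsub_mem_direction hr (subset_affineSpan ℝ C hc)
  obtain rfl : b = 0 := Submodule.disjoint_def.1 hU' b hbU hb
  simpa using hc

theorem mem_interior_add_of_mem_intrinsicInterior [FiniteDimensional ℝ V] {C : Set V}
    {U' : Submodule ℝ V} (hU' : IsCompl (affineSpan ℝ C).direction U') {p : V}
    (hp : p ∈ intrinsicInterior ℝ C) : p ∈ interior (C + (U' : Set V)) := by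
  obtain ⟨hpC, δ, hδ, hball⟩ := mem_intrinsicInterior_iff_forall_dist_lt.1 hp
  set π := Submodule.projection _ U' hU'
  -- `g` is the projection onto `affineSpan ℝ C` along `U'`
  set g : V → V := fun r => p + π (r - p)
  have hg : Continuous g := continuous_const.add
    (π.continuous_of_finiteDimensional.comp (continuous_sub_right p))
  have hsub : g ⁻¹' Metric.ball p δ ⊆ C + (U' : Set V) := fun r hr => by
    refine ⟨g r, hball _ ?_ hr, r - g r, ?_, add_sub_cancel (g r) r⟩
    · simpa [g, add_comm] using AffineSubspace.vadd_mem_of_mem_direction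
        (Submodule.projection_apply_mem hU' (r - p)) hpC
    · rw [show r - g r = (r - p) - π (r - p) by simp only [g]; abel]
      exact Submodule.sub_projection_mem hU' (r - p)
  refine mem_interior_iff_mem_nhds.2 (Filter.mem_of_superset ?_ hsub)
  refine hg.continuousAt.preimage_mem_nhds ?_
  simpa [g] using Metric.ball_mem_nhds p hδ

theorem exists_forall_le_lt_of_notMem_intrinsicInterior [FiniteDimensional ℝ V] {C : Set V}
    (hC : Convex ℝ C) {p q : V} (hp : p ∈ intrinsicInterior ℝ C) (hq : q ∈ affineSpan ℝ C)
    (hqC : q ∉ intrinsicInterior ℝ C) :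
    ∃ f : StrongDual ℝ V, (∀ c ∈ C, f c ≤ f q) ∧ f p < f q := by
  -- `C + U'` is a convex body whose interior meets `affineSpan ℝ C` exactly in `ri C`
  obtain ⟨U', hU'⟩ := (affineSpan ℝ C).direction.exists_isCompl
  set C' := C + (U' : Set V)
  have hC' : Convex ℝ C' := hC.add U'.convex
  have hp' : p ∈ interior C' := mem_interior_add_of_mem_intrinsicInterior hU' hp
  have hq' : q ∉ interior C' := fun h =>
    hqC (mem_intrinsicInterior_of_mem_interior_add hU'.disjoint hq h)
  obtain ⟨f, hf⟩ := geometric_hahn_banach_open_point hC'.interior isOpen_interior hq'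
  refine ⟨f, fun c hc => ?_, hf p hp'⟩
  have hc' : c ∈ closure (interior C') := by
    rw [hC'.closure_interior_eq_closure_of_nonempty_interior ⟨p, hp'⟩]
    exact subset_closure ⟨c, hc, 0, U'.zero_mem, add_zero c⟩
  exact closure_minimal (fun a ha => (hf a ha).le) (isClosed_le f.continuous continuous_const) hc'

end IntrinsicInterior

section Subgradient

variable {V : Type*} [NormedAddCommGroup V] [NormedSpace ℝ V]

/-- The epigraph of `u ↦ inf {φ y | y ∈ A, z ∈ T, y - z = u}`. -/
def subEpigraph (A T : Set V) (φ : V → ℝ) : Set (V × ℝ) :=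
  {p | ∃ y ∈ A, ∃ z ∈ T, y - z = p.1 ∧ φ y ≤ p.2}

theorem ConvexOn.convex_subEpigraph {A T : Set V} {φ : V → ℝ} (hφ : ConvexOn ℝ A φ)
    (hT : Convex ℝ T) : Convex ℝ (subEpigraph A T φ) := by
  rintro ⟨_, t₁⟩ ⟨y₁, hy₁, z₁, hz₁, rfl, h₁⟩ ⟨_, t₂⟩ ⟨y₂, hy₂, z₂, hz₂, rfl, h₂⟩ a b ha hb hab
  refine ⟨a • y₁ + b • y₂, hφ.1 hy₁ hy₂ ha hb hab, a • z₁ + b • z₂, hT hz₁ hz₂ ha hb hab,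
    by simp only [Prod.fst_add, Prod.smul_fst]; module, ?_⟩
  have := hφ.2 hy₁ hy₂ ha hb hab
  simp only [smul_eq_mul, Prod.snd_add, Prod.smul_snd] at this h₁ h₂ ⊢
  linarith [mul_le_mul_of_nonneg_left h₁ ha, mul_le_mul_of_nonneg_left h₂ hb]

theorem notMem_intrinsicInterior_subEpigraph {A T : Set V} {φ : V → ℝ} {x₀ : V}
    (hx₀A : x₀ ∈ A) (hx₀T : x₀ ∈ T) (hmin : ∀ z ∈ T, φ x₀ ≤ φ z) :
    ((0 : V), φ x₀) ∉ intrinsicInterior ℝ (subEpigraph A T φ) := by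
  intro h
  obtain ⟨-, δ, hδ, hball⟩ := mem_intrinsicInterior_iff_forall_dist_lt.1 h
  have hspan : ((0 : V), φ x₀ - δ / 2) ∈ affineSpan ℝ (subEpigraph A T φ) := by
    have hmem : ∀ t ≥ φ x₀, ((0 : V), t) ∈ subEpigraph A T φ := fun t ht =>
      ⟨x₀, hx₀A, x₀, hx₀T, sub_self x₀, ht⟩
    convert AffineMap.lineMap_mem (-(δ / 2)) (subset_affineSpan ℝ _ (hmem _ le_rfl))
      (subset_affineSpan ℝ _ (hmem (φ x₀ + 1) (by linarith))) using 1
    simp only [AffineMap.lineMap_apply_module]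
    ext <;> simp; ring
  obtain ⟨y, -, z, hz, hyz, hle⟩ :=
    hball _ hspan (by simp [Prod.dist_eq, abs_of_pos hδ, hδ])
  obtain rfl : y = z := sub_eq_zero.1 hyz
  linarith [hmin y hz]

variable [FiniteDimensional ℝ V]

theorem Convex.sub_subset_affineSpan_sub {Ω D : Set V} (hΩ : Convex ℝ Ω)
    (hD : intrinsicInterior ℝ Ω ⊆ D) (S : Set V) : Ω - S ⊆ affineSpan ℝ (D - S) := by
  rintro _ ⟨y, hy, z, hz, rfl⟩
  obtain ⟨w, hw⟩ := Set.Nonempty.intrinsicInterior hΩ ⟨y, hy⟩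
  -- `y` lies on the line through `w` and the midpoint of `[w, y]`, both in `ri Ω ⊆ D`
  have hm := hΩ.combo_intrinsicInterior_self_mem_intrinsicInterior hw hy one_half_pos
    one_half_lt_one.le
  have hmem : ∀ d ∈ D, d - z ∈ affineSpan ℝ (D - S) := fun d hd =>
    subset_affineSpan ℝ _ (sub_mem_sub hd hz)
  have hyz :
      y - z = AffineMap.lineMap (w - z) ((1 / 2 : ℝ) • w + (1 - 1 / 2 : ℝ) • y - z) (2 : ℝ) := by
    rw [AffineMap.lineMap_apply_module]
    module
  show y - z ∈ affineSpan ℝ (D - S)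
  rw [hyz]
  exact AffineMap.lineMap_mem 2 (hmem w (hD hw)) (hmem _ (hD hm))

theorem ConvexOn.exists_forall_add_le_of_zero_mem_intrinsicInterior_sub {A T : Set V}
    {φ : V → ℝ} (hφ : ConvexOn ℝ A φ) (hT : Convex ℝ T) {x₀ : V} (hx₀A : x₀ ∈ A)
    (hx₀T : x₀ ∈ T) (hmin : ∀ z ∈ T, φ x₀ ≤ φ z)
    (h0 : (0 : V) ∈ intrinsicInterior ℝ (A - T)) :
    ∃ ℓ : StrongDual ℝ V, ∀ y ∈ A, ∀ z ∈ T, φ x₀ + ℓ (y - z) ≤ φ y := by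
  set C := subEpigraph A T φ
  have hC := hφ.convex_subEpigraph hT
  have h0C : ((0 : V), φ x₀) ∈ C := ⟨x₀, hx₀A, x₀, hx₀T, sub_self x₀, le_rfl⟩
  obtain ⟨p, hp⟩ := Set.Nonempty.intrinsicInterior hC ⟨_, h0C⟩
  obtain ⟨f, hfC, hfp⟩ := exists_forall_le_lt_of_notMem_intrinsicInterior hC hp
    (subset_affineSpan ℝ C h0C)
    (notMem_intrinsicInterior_subEpigraph hx₀A hx₀T hmin)
  set ℓ : StrongDual ℝ V := f.comp (ContinuousLinearMap.inl ℝ V ℝ)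
  set s := f ((0 : V), (1 : ℝ))
  have hf : ∀ u t, f (u, t) = ℓ u + t * s := fun u t => by
    rw [show ((u, t) : V × ℝ) = (u, 0) + t • ((0 : V), (1 : ℝ)) by simp, map_add, map_smul]
    rfl
  have key : ∀ y ∈ A, ∀ z ∈ T, ℓ (y - z) + (φ y - φ x₀) * s ≤ 0 := fun y hy z hz => by
    have := hfC (y - z, φ y) ⟨y, hy, z, hz, rfl, le_rfl⟩
    rw [hf, hf, map_zero] at this
    linarith
  -- the separating hyperplane is not vertical
  have hs : s < 0 := by
    have h1C : ((0 : V), φ x₀ + 1) ∈ C := ⟨x₀, hx₀A, x₀, hx₀T, sub_self x₀, by linarith⟩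
    have hs_nonpos := hfC _ h1C
    rw [hf, hf, add_mul, one_mul] at hs_nonpos
    refine lt_of_le_of_ne (by linarith) fun hs0 => ?_
    obtain ⟨y, hy, z, hz, hyz, -⟩ := intrinsicInterior_subset hp
    have hℓ : ∀ u ∈ A - T, ℓ u ≤ 0 := by
      rintro _ ⟨y, hy, z, hz, rfl⟩
      simpa [hs0] using key y hy z hz
    have := eq_zero_of_forall_nonpos_of_zero_mem_intrinsicInterior ℓ.toLinearMap hℓ h0
      (sub_mem_sub hy hz)
    rw [hyz, ContinuousLinearMap.coe_coe] at this
    rw [← Prod.mk.eta (p := p), hf, hf, this, hs0] at hfp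
    simp at hfp
  refine ⟨(-s)⁻¹ • ℓ, fun y hy z hz => ?_⟩
  have := key y hy z hz
  have : (-s)⁻¹ * ℓ (y - z) ≤ φ y - φ x₀ := by
    rw [inv_mul_le_iff₀ (neg_pos.2 hs)]
    linarith
  show φ x₀ + (-s)⁻¹ * ℓ (y - z) ≤ φ y
  linarith

theorem ConvexOn.exists_forall_add_le_of_mem_intrinsicInterior {A : Set V} {φ : V → ℝ}
    (hφ : ConvexOn ℝ A φ) {w : V} (hw : w ∈ intrinsicInterior ℝ A) :
    ∃ ℓ : StrongDual ℝ V, ∀ y ∈ A, φ w + ℓ (y - w) ≤ φ y := by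
  have h0 : (0 : V) ∈ intrinsicInterior ℝ (A - {w}) := by
    have hA : A - {w} = AffineEquiv.constVAdd ℝ V (-w) '' A := by
      simp [Set.sub_singleton, neg_add_eq_sub]
    rw [hA, AffineEquiv.intrinsicInterior_image]
    exact ⟨w, hw, by simp⟩
  obtain ⟨ℓ, hℓ⟩ := hφ.exists_forall_add_le_of_zero_mem_intrinsicInterior_sub
    (convex_singleton w) (intrinsicInterior_subset hw) rfl (fun z hz => hz ▸ le_rfl) h0
  exact ⟨ℓ, fun y hy => hℓ y hy w rfl⟩

end Subgradient

section VariationalInequality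

variable {E : Type*} [NormedAddCommGroup E] [InnerProductSpace ℝ E] {Ω : Set E} {F : E → E}

/-- The solution set `S₀ = sol(F, Ω)` of the variational inequality. -/
def viSol (Ω : Set E) (F : E → E) : Set E :=
  {x | x ∈ Ω ∧ ∀ y ∈ Ω, 0 ≤ ⟪F x, y - x⟫_ℝ}

theorem inner_nonneg_of_mem_viSol (hF : ∀ x ∈ Ω, ∀ y ∈ Ω, 0 ≤ ⟪F x - F y, x - y⟫_ℝ)
    {x : E} (hx : x ∈ viSol Ω F) {w : E} (hw : w ∈ Ω) : 0 ≤ ⟪F w, w - x⟫_ℝ := by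
  have := hF w hw x hx.1
  rw [inner_sub_left] at this
  linarith [hx.2 w hw]

theorem mem_viSol_of_forall_inner_nonneg (hΩ : Convex ℝ Ω) (hF : ContinuousOn F Ω) {x : E}
    (hx : x ∈ Ω) (h : ∀ w ∈ Ω, 0 ≤ ⟪F w, w - x⟫_ℝ) : x ∈ viSol Ω F := by
  refine ⟨hx, fun y hy => ?_⟩
  have hseg : ∀ t ∈ Ioc (0 : ℝ) 1, x + t • (y - x) ∈ Ω := fun t ht =>
    hΩ.add_smul_sub_mem hx hy ⟨ht.1.le, ht.2⟩
  have hpos : ∀ t ∈ Ioc (0 : ℝ) 1, 0 ≤ ⟪F (x + t • (y - x)), y - x⟫_ℝ := fun t ht => by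
    have := h _ (hseg t ht)
    rw [add_sub_cancel_left, real_inner_smul_right] at this
    exact nonneg_of_mul_nonneg_right this ht.1
  have hpath : Filter.Tendsto (fun t : ℝ => x + t • (y - x)) (nhdsWithin 0 (Ioi 0))
      (nhdsWithin x Ω) := by
    refine tendsto_nhdsWithin_iff.2 ⟨?_, ?_⟩
    · have : Continuous fun t : ℝ => x + t • (y - x) := by fun_prop
      simpa using (this.tendsto 0).mono_left nhdsWithin_le_nhds
    · filter_upwards [Ioc_mem_nhdsGT zero_lt_one] using hseg
  refine ge_of_tendsto (((hF x hx).tendsto.comp hpath).inner tendsto_const_nhds) ?_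
  filter_upwards [Ioc_mem_nhdsGT zero_lt_one] using hpos

theorem convex_viSol (hΩ : Convex ℝ Ω) (hFc : ContinuousOn F Ω)
    (hF : ∀ x ∈ Ω, ∀ y ∈ Ω, 0 ≤ ⟪F x - F y, x - y⟫_ℝ) : Convex ℝ (viSol Ω F) := by
  intro x₁ hx₁ x₂ hx₂ a b ha hb hab
  refine mem_viSol_of_forall_inner_nonneg hΩ hFc (hΩ hx₁.1 hx₂.1 ha hb hab) fun w hw => ?_
  have hw' : w - (a • x₁ + b • x₂) = a • (w - x₁) + b • (w - x₂) := by
    obtain rfl : b = 1 - a := by linarith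
    module
  rw [hw', inner_add_right, real_inner_smul_right, real_inner_smul_right]
  exact add_nonneg (mul_nonneg ha (inner_nonneg_of_mem_viSol hF hx₁ hw))
    (mul_nonneg hb (inner_nonneg_of_mem_viSol hF hx₂ hw))

end VariationalInequality

theorem dualGap_eq_zero_of_mem_viSol {n : ℕ} {Ω : Set (EuclideanSpace ℝ (Fin n))}
    {F : EuclideanSpace ℝ (Fin n) → EuclideanSpace ℝ (Fin n)}
    (hF : ∀ x ∈ Ω, ∀ y ∈ Ω, 0 ≤ ⟪F x - F y, x - y⟫_ℝ) {x : EuclideanSpace ℝ (Fin n)}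
    (hx : x ∈ viSol Ω F) : dualGap Ω F x = 0 := by
  refine le_antisymm (iSup₂_le fun y hy => ?_) (le_iSup₂_of_le x hx.1 (by simp))
  have := inner_nonneg_of_mem_viSol hF hx hy
  rw [← neg_sub, inner_neg_right] at this
  exact_mod_cast (neg_nonneg.1 this)

theorem S0_inter_SGeps_subset_Sphi {n : ℕ}
    (Ω : Set (EuclideanSpace ℝ (Fin n)))
    (hconv : Convex ℝ Ω)
    (F : EuclideanSpace ℝ (Fin n) → EuclideanSpace ℝ (Fin n))
    (hFcont : ContinuousOn F Ω)
    (hFmono : ∀ x ∈ Ω, ∀ y ∈ Ω, 0 ≤ ⟪F x - F y, x - y⟫_ℝ)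
    (φ : EuclideanSpace ℝ (Fin n) → ℝ)
    (hφconv : ConvexOn ℝ Ω φ)
    (hriS0 : (0 : EuclideanSpace ℝ (Fin n)) ∈
      intrinsicInterior ℝ ({x | (subdiffOn Ω φ x).Nonempty} -
        {x | x ∈ Ω ∧ ∀ y ∈ Ω, 0 ≤ ⟪F x, y - x⟫_ℝ})) :
    ∀ ε : ℝ, 0 < ε →
      ({x | x ∈ Ω ∧ ∀ y ∈ Ω, 0 ≤ ⟪F x, y - x⟫_ℝ} ∩
        {x | x ∈ Ω ∧ ∀ z ∈ Ω, dualGap Ω F x + ((ε * φ x : ℝ) : EReal) ≤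
          dualGap Ω F z + ((ε * φ z : ℝ) : EReal)}) ⊆
      {x | (x ∈ Ω ∧ ∀ y ∈ Ω, 0 ≤ ⟪F x, y - x⟫_ℝ) ∧
        ∃ v ∈ subdiffOn Ω φ x,
          ∀ z, (z ∈ Ω ∧ ∀ y ∈ Ω, 0 ≤ ⟪F z, y - z⟫_ℝ) → 0 ≤ ⟪v, z - x⟫_ℝ} := by
  rintro ε hε x ⟨hxS, -, hxmin⟩
  have hmin : ∀ z ∈ viSol Ω F, φ x ≤ φ z := fun z hz => by
    have := hxmin z hz.1
    rw [dualGap_eq_zero_of_mem_viSol hFmono hxS, dualGap_eq_zero_of_mem_viSol hFmono hz,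
      zero_add, zero_add, EReal.coe_le_coe_iff] at this
    exact le_of_mul_le_mul_left this hε
  have hdom : intrinsicInterior ℝ Ω ⊆ {x | (subdiffOn Ω φ x).Nonempty} := fun w hw => by
    obtain ⟨ℓ, hℓ⟩ := hφconv.exists_forall_add_le_of_mem_intrinsicInterior hw
    exact ⟨(InnerProductSpace.toDual ℝ _).symm ℓ, intrinsicInterior_subset hw,
      by simpa only [InnerProductSpace.toDual_symm_apply] using hℓ⟩
  have h0 : (0 : EuclideanSpace ℝ (Fin n)) ∈ intrinsicInterior ℝ (Ω - viSol Ω F) :=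
    intrinsicInterior_mono_of_subset_affineSpan (sub_subset_sub_right fun _ hd => hd.some_mem.1)
      (hconv.sub_subset_affineSpan_sub hdom _) hriS0
  obtain ⟨ℓ, hℓ⟩ := hφconv.exists_forall_add_le_of_zero_mem_intrinsicInterior_sub
    (convex_viSol hconv hFcont hFmono) hxS.1 hxS hmin h0
  refine ⟨hxS, (InnerProductSpace.toDual ℝ _).symm ℓ, ⟨hxS.1, fun y hy => ?_⟩, fun z hz => ?_⟩
  · simpa only [InnerProductSpace.toDual_symm_apply] using hℓ y hy x hxS
  · have := hℓ x hxS.1 z hz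
    rw [InnerProductSpace.toDual_symm_apply, ← neg_sub, map_neg]
    linarith
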